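/- arXiv:2404.13713 — 9 statements merged into one kernel-verified Lean document; each statement's English description precedes it below -/
import Mathlib

section
/- Let B be a k-by-k reciprocal matrix with row sums r₁ ≥ r₂ ≥ ⋯ ≥ r_k, and define f(x) = 1/x + 1/(r₁−r₂+x) + ⋯ + 1/(r₁−r_k+x) + 1 − r₁ − x for x > 0. Then f(1) ≤ 0, with equality if and only if B is the all-ones matrix. In particular, if f(x) = 0 for some x > 0, then x ≤ 1. -/
/-!
Since `b_ij + b_ji = b_ij + 1 / b_ij ≥ 2`, with equality only at `b_ij = 1`, the entries of a
reciprocal `n × n` matrix sum to at least `n²`, with equality only for the all-ones matrix. The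
row sums add up to this total, so the largest one satisfies `r₁ ≥ n`. Every term
`1 / (r₁ - rᵢ + 1)` is at most `1`, hence `f(1) ≤ n - r₁ ≤ 0`, and `f(1) = 0` forces `r₁ = n`
and the entry sum to equal `n²`. Finally `f` is strictly decreasing on `(0, ∞)`, so a positive
zero of `f` cannot exceed `1`.
-/

open Matrix BigOperators Finset

/-- A positive square matrix is reciprocal if `A j i = 1 / A i j` for all `i, j`. -/
def IsReciprocal {n : ℕ} (A : Matrix (Fin n) (Fin n) ℝ) : Prop :=
  (∀ i j, 0 < A i j) ∧ ∀ i j, A j i = 1 / A i j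

/-- A reciprocal matrix is consistent if `A i j * A j k = A i k` for all `i, j, k`. -/
def IsConsistent {n : ℕ} (A : Matrix (Fin n) (Fin n) ℝ) : Prop :=
  IsReciprocal A ∧ ∀ i j k, A i j * A j k = A i k

/-- A vector is positive if all its entries are positive. -/
def PosVec {n : ℕ} (w : Fin n → ℝ) : Prop := ∀ i, 0 < w i

/-- A positive vector `w` is efficient for `A` if any positive vector `v` whose associated
consistent matrix approximates `A` at least as well as that of `w` (entrywise) is a positive
multiple of `w`. -/
def IsEfficient {n : ℕ} (A : Matrix (Fin n) (Fin n) ℝ) (w : Fin n → ℝ) : Prop :=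
  PosVec w ∧ ∀ v : Fin n → ℝ, PosVec v →
    (∀ i j, |A i j - v i / v j| ≤ |A i j - w i / w j|) →
    ∃ c : ℝ, 0 < c ∧ v = c • w

/-- The `i`-th row sum of a matrix. -/
noncomputable def rowSum {n : ℕ} (A : Matrix (Fin n) (Fin n) ℝ) (i : Fin n) : ℝ := ∑ j, A i j

/-- Given the row sums `r` in nonincreasing order (`r 0` the largest), the auxiliary function
`f(x) = 1/x + ∑_{i=2}^{k} 1/(r₁ - rᵢ + x) + 1 - r₁ - x` (note the `i = 1` term of the sum is
`1/x` since `r 0 - r 0 = 0`). -/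
noncomputable def auxF {k : ℕ} (r : Fin (k + 1) → ℝ) (x : ℝ) : ℝ :=
  (∑ i, 1 / (r 0 - r i + x)) + 1 - r 0 - x

/-- A reciprocal matrix `B` is well-behaved if, with row sums `r₁ ≥ ⋯ ≥ r_k`, either
`r₁ - r_k ≥ 1` (type I), or `r₁ - r_k < 1` and `f(1 + r_k - r₁) ≥ 0` (type II). -/
def WellBehaved {k : ℕ} (B : Matrix (Fin (k + 1)) (Fin (k + 1)) ℝ) : Prop :=
  ∃ σ : Equiv.Perm (Fin (k + 1)), Antitone (rowSum B ∘ σ) ∧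
    (1 ≤ rowSum B (σ 0) - rowSum B (σ (Fin.last k)) ∨
      (rowSum B (σ 0) - rowSum B (σ (Fin.last k)) < 1 ∧
        0 ≤ auxF (rowSum B ∘ σ) (1 + rowSum B (σ (Fin.last k)) - rowSum B (σ 0))))

lemma two_le_add_one_div {a : ℝ} (ha : 0 < a) : 2 ≤ a + 1 / a := by
  have : a + 1 / a - 2 = (a - 1) ^ 2 / a := by field_simp; ring
  linarith [div_nonneg (sq_nonneg (a - 1)) ha.le]

lemma add_one_div_eq_two_iff {a : ℝ} (ha : 0 < a) : a + 1 / a = 2 ↔ a = 1 := by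
  constructor
  · intro h
    have hsq : (a - 1) ^ 2 = 0 := by field_simp at h; linarith
    linarith [pow_eq_zero_iff two_ne_zero |>.mp hsq]
  · rintro rfl
    norm_num

lemma two_mul_sum_sub_sq_eq_sum_add_transpose {n : ℕ} (A : Matrix (Fin n) (Fin n) ℝ) :
    2 * (∑ i, ∑ j, A i j - (n : ℝ) ^ 2) = ∑ i, ∑ j, (A i j + A j i - 2) := by
  simp only [sum_sub_distrib, sum_add_distrib, sum_comm (f := fun i j => A j i),
    sum_const, card_univ, Fintype.card_fin, nsmul_eq_mul]
  ring

namespace IsReciprocal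

variable {n : ℕ} {B : Matrix (Fin n) (Fin n) ℝ}

lemma two_le_add_transpose (hB : IsReciprocal B) (i j : Fin n) : 2 ≤ B i j + B j i :=
  hB.2 i j ▸ two_le_add_one_div (hB.1 i j)

lemma add_transpose_eq_two_iff (hB : IsReciprocal B) (i j : Fin n) :
    B i j + B j i = 2 ↔ B i j = 1 :=
  hB.2 i j ▸ add_one_div_eq_two_iff (hB.1 i j)

lemma sq_le_sum (hB : IsReciprocal B) : (n : ℝ) ^ 2 ≤ ∑ i, ∑ j, B i j := by
  have hdefect := two_mul_sum_sub_sq_eq_sum_add_transpose B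
  have hnonneg : 0 ≤ ∑ i, ∑ j, (B i j + B j i - 2) :=
    sum_nonneg fun i _ => sum_nonneg fun j _ => sub_nonneg.2 (hB.two_le_add_transpose i j)
  linarith

lemma sum_eq_sq_iff (hB : IsReciprocal B) :
    ∑ i, ∑ j, B i j = (n : ℝ) ^ 2 ↔ ∀ i j, B i j = 1 := by
  have hnonneg : ∀ i j, 0 ≤ B i j + B j i - 2 := fun i j =>
    sub_nonneg.2 (hB.two_le_add_transpose i j)
  calc ∑ i, ∑ j, B i j = (n : ℝ) ^ 2
      ↔ ∑ i, ∑ j, (B i j + B j i - 2) = 0 := by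
        rw [← two_mul_sum_sub_sq_eq_sum_add_transpose]; constructor <;> intro h <;> linarith
    _ ↔ ∀ i j, B i j + B j i - 2 = 0 := by
        rw [Fintype.sum_eq_zero_iff_of_nonneg fun i => sum_nonneg fun j _ => hnonneg i j,
          funext_iff]
        exact forall_congr' fun i =>
          (Fintype.sum_eq_zero_iff_of_nonneg (hnonneg i)).trans funext_iff
    _ ↔ ∀ i j, B i j = 1 := by
        simp only [sub_eq_zero, hB.add_transpose_eq_two_iff]

end IsReciprocal

section auxF

variable {k : ℕ} {r : Fin (k + 1) → ℝ}

lemma auxF_one_le (hr : ∀ i, r i ≤ r 0) : auxF r 1 ≤ k + 1 - r 0 := by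
  have : ∑ i, 1 / (r 0 - r i + 1) ≤ ∑ _i : Fin (k + 1), (1 : ℝ) :=
    sum_le_sum fun i _ => (div_le_one (by linarith [hr i])).2 (by linarith [hr i])
  simp only [sum_const, card_univ, Fintype.card_fin, nsmul_eq_mul, mul_one] at this
  push_cast at this
  unfold auxF
  linarith

lemma auxF_strictAntiOn (hr : ∀ i, r i ≤ r 0) : StrictAntiOn (auxF r) (Set.Ioi 0) := by
  intro x hx y _ hxy
  have : ∑ i, 1 / (r 0 - r i + y) ≤ ∑ i, 1 / (r 0 - r i + x) :=
    sum_le_sum fun i _ =>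
      one_div_le_one_div_of_le (by linarith [hr i, Set.mem_Ioi.1 hx]) (by linarith)
  unfold auxF
  linarith

lemma auxF_one_of_forall_eq {c : ℝ} (h : ∀ i, r i = c) : auxF r 1 = k + 1 - c := by
  simp only [auxF, h, sub_self, zero_add, div_one, sum_const, card_univ, Fintype.card_fin,
    nsmul_eq_mul, mul_one]
  push_cast
  ring

end auxF

/-- For a reciprocal matrix `B` with row sums `r` in nonincreasing order and
`f(x) = 1/x + ∑_{i=2}^{k} 1/(r₁ - rᵢ + x) + 1 - r₁ - x`, we have `f(1) ≤ 0`, with equality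
iff `B` is the all-ones matrix; in particular any positive zero of `f` is at most `1`. -/
theorem stmt6 {k : ℕ} (B : Matrix (Fin (k + 1)) (Fin (k + 1)) ℝ) (hB : IsReciprocal B)
    (r : Fin (k + 1) → ℝ) (hr : Antitone r)
    (hperm : ∃ σ : Equiv.Perm (Fin (k + 1)), ∀ i, r i = rowSum B (σ i))
    (f : ℝ → ℝ) (hf : ∀ x : ℝ, f x = auxF r x) :
    f 1 ≤ 0 ∧ (f 1 = 0 ↔ ∀ i j, B i j = 1) ∧ ∀ x : ℝ, 0 < x → f x = 0 → x ≤ 1 := by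
  obtain ⟨σ, hσ⟩ := hperm
  have hr0 : ∀ i, r i ≤ r 0 := fun i => hr (Fin.zero_le i)
  have hsum : ∑ i, r i = ∑ i, ∑ j, B i j := by
    simp only [hσ]
    exact Equiv.sum_comp σ (rowSum B)
  have hmean : ∑ i, r i ≤ (k + 1) * r 0 := by
    simpa using sum_le_card_nsmul univ r (r 0) fun i _ => hr0 i
  have hsq : ((k : ℝ) + 1) ^ 2 ≤ ∑ i, ∑ j, B i j := by exact_mod_cast hB.sq_le_sum
  have hf1 : f 1 ≤ k + 1 - r 0 := hf 1 ▸ auxF_one_le hr0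
  have hmax : (k : ℝ) + 1 ≤ r 0 := by nlinarith
  refine ⟨by linarith, ⟨fun hzero => hB.sum_eq_sq_iff.1 ?_, fun hone => ?_⟩,
    fun x hx hfx => ?_⟩
  · push_cast
    nlinarith
  · have hrow : ∀ i, r i = k + 1 := fun i => by simp [hσ, rowSum, hone]
    rw [hf, auxF_one_of_forall_eq hrow, sub_self]
  · by_contra! hx1
    have hlt := auxF_strictAntiOn hr0 (Set.mem_Ioi.2 one_pos) (Set.mem_Ioi.2 hx) hx1
    rw [← hf, ← hf] at hlt
    linarith
end

section
/- Let A be an n-by-n reciprocal matrix with n > 2 and let w be a positive n-vector. If there exist distinct indices i, j such that the subvector w(i) (w with entry i deleted) is efficient for the principal submatrix A(i) (A with row and column i deleted) and w(j) is efficient for A(j), then w is efficient for A. -/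
open Matrix BigOperators Finset

/-- For `n > 2`: if two distinct one-entry-deleted subvectors of a positive vector `w` are
efficient for the corresponding principal submatrices of a reciprocal matrix `A`, then `w`
is efficient for `A`. -/
theorem stmt10 {n : ℕ} (hn : 2 < n + 1) (A : Matrix (Fin (n + 1)) (Fin (n + 1)) ℝ)
    (hA : IsReciprocal A) (w : Fin (n + 1) → ℝ) (hw : PosVec w)
    (i j : Fin (n + 1)) (hij : i ≠ j)
    (hi : IsEfficient (A.submatrix i.succAbove i.succAbove) (w ∘ i.succAbove))
    (hj : IsEfficient (A.submatrix j.succAbove j.succAbove) (w ∘ j.succAbove)) :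
    IsEfficient A w := by
  refine ⟨hw, fun v hv hineq => ?_⟩
  obtain ⟨c, hc, hvc⟩ := hi.2 (v ∘ i.succAbove) (fun a => hv _)
    (fun a b => hineq (i.succAbove a) (i.succAbove b))
  obtain ⟨d, hd, hvd⟩ := hj.2 (v ∘ j.succAbove) (fun a => hv _)
    (fun a b => hineq (j.succAbove a) (j.succAbove b))
  have hvc' : ∀ m : Fin (n + 1), m ≠ i → v m = c * w m := by
    intro m hm
    obtain ⟨a, rfl⟩ := Fin.exists_succAbove_eq hm
    exact congrFun hvc a
  have hvd' : ∀ m : Fin (n + 1), m ≠ j → v m = d * w m := by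
    intro m hm
    obtain ⟨a, rfl⟩ := Fin.exists_succAbove_eq hm
    exact congrFun hvd a
  -- find k distinct from i and j
  have hcard : ({i, j} : Finset (Fin (n + 1))) ≠ Finset.univ := by
    intro h
    have h2 : Fintype.card (Fin (n + 1)) ≤ 2 := by
      rw [← Finset.card_univ, ← h]
      exact (Finset.card_insert_le _ _).trans (by simp)
    simp only [Fintype.card_fin] at h2
    omega
  obtain ⟨k, hk⟩ : ∃ k, k ∉ ({i, j} : Finset (Fin (n + 1))) := by
    by_contra h
    push_neg at h
    exact hcard (Finset.eq_univ_iff_forall.mpr h)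
  simp only [Finset.mem_insert, Finset.mem_singleton, not_or] at hk
  have hcd : c = d := by
    have h1 := hvc' k hk.1
    have h2 := hvd' k hk.2
    have := (hw k).ne'
    nlinarith [hw k]
  refine ⟨c, hc, funext fun m => ?_⟩
  by_cases hm : m = i
  · subst hm
    rw [hcd]
    simpa using hvd' m hij
  · simpa using hvc' m hm
end

section
/- For any (n−1)-by-(n−1) reciprocal matrix B and any positive n-vector w, there exists a unique n-by-n reciprocal matrix A whose leading (n−1)-by-(n−1) principal submatrix is B and whose Perron vector is (a positive multiple of) w. -/
open Matrix BigOperators Finset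

/-!
A reciprocal matrix extending `B` is determined by its last column `c > 0`: the last row is
`1 / c` and the corner entry is `1`. Write `u` for `w` without its last entry, `t = w (last n)`
and `mᵢ = (B u)ᵢ / uᵢ`. The first `n` eigen-equations force `cᵢ = (ρ - mᵢ) uᵢ / t`, which is
positive iff `ρ > mᵢ`, and the last one then reads `∑ᵢ 1 / (ρ - mᵢ) = ρ - 1`. On `ρ > max mᵢ`
the difference of the two sides is continuous, strictly decreasing and changes sign, so exactly
one `ρ`, hence exactly one `A`, works.
-/

section RootOfSumInv
variable {ι : Type*} [Fintype ι] (m : ι → ℝ)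

theorem sum_inv_sub_le_of_le {x y : ℝ} (hx : ∀ i, m i < x) (hxy : x ≤ y) :
    ∑ i, (y - m i)⁻¹ ≤ ∑ i, (x - m i)⁻¹ :=
  sum_le_sum fun i _ => inv_anti₀ (sub_pos.2 (hx i)) (by linarith)

theorem exists_sub_one_le_sum_inv_sub : ∃ a, (∀ i, m i < a) ∧ a - 1 ≤ ∑ i, (a - m i)⁻¹ := by
  rcases isEmpty_or_nonempty ι with hι | hι
  · exact ⟨0, isEmptyElim, by simp⟩
  obtain ⟨i₀, -, hi₀⟩ := exists_max_image univ m univ_nonempty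
  -- just to the right of the largest `m i₀`, the term `(a - m i₀)⁻¹ = |m i₀| + 2` dominates
  set ε := (|m i₀| + 2)⁻¹
  have hε : 0 < ε := by positivity
  have hε₁ : ε ≤ 1 := inv_le_one_of_one_le₀ (by linarith [abs_nonneg (m i₀)])
  refine ⟨m i₀ + ε, fun i => by linarith [hi₀ i (mem_univ i)], ?_⟩
  calc m i₀ + ε - 1 ≤ |m i₀| + 2 := by linarith [le_abs_self (m i₀)]
    _ = (m i₀ + ε - m i₀)⁻¹ := by simp [ε]
    _ ≤ ∑ i, (m i₀ + ε - m i)⁻¹ :=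
      single_le_sum (f := fun i => (m i₀ + ε - m i)⁻¹)
        (fun i _ => inv_nonneg.2 (by linarith [hi₀ i (mem_univ i)])) (mem_univ i₀)

theorem exists_sum_inv_sub_le_sub_one {a : ℝ} (ha : ∀ i, m i < a) :
    ∃ b, a ≤ b ∧ ∑ i, (b - m i)⁻¹ ≤ b - 1 := by
  have hcard : (0 : ℝ) ≤ Fintype.card ι := Nat.cast_nonneg _
  refine ⟨max a 0 + Fintype.card ι + 1, by linarith [le_max_left a 0], ?_⟩
  have hterm : ∀ i, (max a 0 + Fintype.card ι + 1 - m i)⁻¹ ≤ 1 := fun i =>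
    inv_le_one_of_one_le₀ (by linarith [ha i, le_max_left a 0])
  calc ∑ i, (max a 0 + Fintype.card ι + 1 - m i)⁻¹ ≤ ∑ _i : ι, (1 : ℝ) :=
        sum_le_sum fun i _ => hterm i
    _ = Fintype.card ι := by simp
    _ ≤ _ := by linarith [le_max_right a 0]

theorem exists_unique_sum_inv_sub_eq_sub_one :
    ∃! x, (∀ i, m i < x) ∧ ∑ i, (x - m i)⁻¹ = x - 1 := by
  obtain ⟨a, ha, hfa⟩ := exists_sub_one_le_sum_inv_sub m
  obtain ⟨b, hab, hfb⟩ := exists_sum_inv_sub_le_sub_one m ha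
  have hIcc : ∀ x ∈ Set.Icc a b, ∀ i, m i < x := fun x hx i => (ha i).trans_le hx.1
  have hcont : ContinuousOn (fun x => ∑ i, (x - m i)⁻¹ - (x - 1)) (Set.Icc a b) :=
    (continuousOn_finsetSum _ fun i _ => (continuousOn_id.sub continuousOn_const).inv₀
      fun x hx => sub_ne_zero.2 (hIcc x hx i).ne').sub (continuousOn_id.sub continuousOn_const)
  obtain ⟨x, hx, hfx⟩ : (0 : ℝ) ∈ _ '' Set.Icc a b :=
    intermediate_value_Icc' hab hcont ⟨by linarith, by linarith⟩
  refine ⟨x, ⟨hIcc x hx, by simp only at hfx; linarith⟩, fun y ⟨hy, hfy⟩ => ?_⟩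
  rcases le_total x y with hxy | hyx
  · linarith [sum_inv_sub_le_of_le m (hIcc x hx) hxy]
  · linarith [sum_inv_sub_le_of_le m hy hyx]

end RootOfSumInv

theorem IsReciprocal.apply_self {n : ℕ} {A : Matrix (Fin n) (Fin n) ℝ} (hA : IsReciprocal A)
    (i : Fin n) : A i i = 1 := by
  have h := hA.2 i i
  have hpos := hA.1 i i
  field_simp at h
  nlinarith

section ReciprocalBorder
variable {n : ℕ}

noncomputable def reciprocalBorder (B : Matrix (Fin n) (Fin n) ℝ) (c : Fin n → ℝ) :
    Matrix (Fin (n + 1)) (Fin (n + 1)) ℝ :=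
  Matrix.of fun i j =>
    Fin.lastCases (Fin.lastCases 1 (fun j => 1 / c j) j) (fun i => Fin.lastCases (c i) (B i) j) i

variable (B : Matrix (Fin n) (Fin n) ℝ) (c : Fin n → ℝ)

@[simp]
theorem reciprocalBorder_castSucc_castSucc (i j : Fin n) :
    reciprocalBorder B c i.castSucc j.castSucc = B i j := by
  simp [reciprocalBorder]

@[simp]
theorem reciprocalBorder_castSucc_last (i : Fin n) :
    reciprocalBorder B c i.castSucc (Fin.last n) = c i := by
  simp [reciprocalBorder]

@[simp]
theorem reciprocalBorder_last_castSucc (j : Fin n) :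
    reciprocalBorder B c (Fin.last n) j.castSucc = 1 / c j := by
  simp [reciprocalBorder]

@[simp]
theorem reciprocalBorder_last_last : reciprocalBorder B c (Fin.last n) (Fin.last n) = 1 := by
  simp [reciprocalBorder]

@[simp]
theorem submatrix_castSucc_reciprocalBorder :
    (reciprocalBorder B c).submatrix Fin.castSucc Fin.castSucc = B := by
  ext i j
  simp

variable {B c}

theorem isReciprocal_reciprocalBorder (hB : IsReciprocal B) (hc : ∀ i, 0 < c i) :
    IsReciprocal (reciprocalBorder B c) := by
  refine ⟨fun i j => ?_, fun i j => ?_⟩ <;>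
    induction i using Fin.lastCases <;> induction j using Fin.lastCases
  all_goals simp [hB.1, hc]
  simpa using hB.2 _ _

theorem IsReciprocal.eq_reciprocalBorder {A : Matrix (Fin (n + 1)) (Fin (n + 1)) ℝ}
    (hA : IsReciprocal A) (hAB : A.submatrix Fin.castSucc Fin.castSucc = B) :
    A = reciprocalBorder B (fun i => A i.castSucc (Fin.last n)) := by
  subst hAB
  ext i j
  induction i using Fin.lastCases <;> induction j using Fin.lastCases <;>
    simp [hA.apply_self, ← hA.2]

theorem mulVec_reciprocalBorder_eq_smul_iff' (w : Fin (n + 1) → ℝ) (ρ : ℝ) :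
    reciprocalBorder B c *ᵥ w = ρ • w ↔
      (∀ i, (B *ᵥ (w ∘ Fin.castSucc)) i + c i * w (Fin.last n) = ρ * w i.castSucc) ∧
        ∑ i, w i.castSucc / c i + w (Fin.last n) = ρ * w (Fin.last n) := by
  simp [funext_iff, Fin.forall_fin_succ', mulVec, dotProduct, Fin.sum_univ_castSucc,
    div_eq_inv_mul]

end ReciprocalBorder

section PerronBorder
variable {n : ℕ} (B : Matrix (Fin n) (Fin n) ℝ) (w : Fin (n + 1) → ℝ)

noncomputable def rowRatio (i : Fin n) : ℝ := (B *ᵥ (w ∘ Fin.castSucc)) i / w i.castSucc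

noncomputable def borderColumn (ρ : ℝ) (i : Fin n) : ℝ :=
  (ρ - rowRatio B w i) * w i.castSucc / w (Fin.last n)

variable {B w}

theorem borderColumn_pos_iff (hw : PosVec w) {ρ : ℝ} {i : Fin n} :
    0 < borderColumn B w ρ i ↔ rowRatio B w i < ρ := by
  rw [borderColumn, div_pos_iff_of_pos_right (hw _), mul_pos_iff_of_pos_right (hw _), sub_pos]

theorem mulVec_reciprocalBorder_eq_smul_iff {c : Fin n → ℝ} (hw : ∀ i, w i ≠ 0) (ρ : ℝ) :
    reciprocalBorder B c *ᵥ w = ρ • w ↔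
      c = borderColumn B w ρ ∧ ∑ i, (ρ - rowRatio B w i)⁻¹ = ρ - 1 := by
  have hrow : ∀ i, (B *ᵥ (w ∘ Fin.castSucc)) i + c i * w (Fin.last n) = ρ * w i.castSucc ↔
      c i = borderColumn B w ρ i := fun i => by
    rw [borderColumn, rowRatio, eq_div_iff (hw _), sub_mul, div_mul_cancel₀ _ (hw _)]
    constructor <;> intro h <;> linarith
  simp only [mulVec_reciprocalBorder_eq_smul_iff', hrow, ← funext_iff]
  refine and_congr_right fun hc => ?_
  subst hc
  have hsum : ∑ i, w i.castSucc / borderColumn B w ρ i =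
      w (Fin.last n) * ∑ i, (ρ - rowRatio B w i)⁻¹ := by
    rw [mul_sum]
    refine sum_congr rfl fun i _ => ?_
    rw [borderColumn, div_div_eq_mul_div, mul_comm (w _), mul_div_mul_right _ _ (hw _),
      div_eq_mul_inv]
  rw [hsum, ← mul_add_one, mul_comm ρ, mul_right_inj' (hw _)]
  constructor <;> intro h <;> linarith

end PerronBorder

/-- For any `(n-1) × (n-1)` reciprocal matrix `B` and positive `n`-vector `w`, there is a
unique `n × n` reciprocal matrix `A` with leading principal submatrix `B` and Perron vector
`w` (i.e. `w` is a positive eigenvector of `A`). -/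
theorem stmt12 {n : ℕ} (B : Matrix (Fin n) (Fin n) ℝ) (hB : IsReciprocal B)
    (w : Fin (n + 1) → ℝ) (hw : PosVec w) :
    ∃! A : Matrix (Fin (n + 1)) (Fin (n + 1)) ℝ,
      IsReciprocal A ∧ A.submatrix Fin.castSucc Fin.castSucc = B ∧
      ∃ ρ : ℝ, A.mulVec w = ρ • w := by
  have hw₀ : ∀ i, w i ≠ 0 := fun i => (hw i).ne'
  obtain ⟨ρ, ⟨hρ_gt, hρ⟩, hρ_unique⟩ := exists_unique_sum_inv_sub_eq_sub_one (rowRatio B w)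
  refine ⟨reciprocalBorder B (borderColumn B w ρ), ⟨?_, by simp, ρ, ?_⟩, ?_⟩
  · exact isReciprocal_reciprocalBorder hB fun i => (borderColumn_pos_iff hw).2 (hρ_gt i)
  · exact (mulVec_reciprocalBorder_eq_smul_iff hw₀ ρ).2 ⟨rfl, hρ⟩
  rintro A ⟨hA, hAB, ρ', hAw⟩
  have hA_eq := hA.eq_reciprocalBorder hAB
  rw [hA_eq, mulVec_reciprocalBorder_eq_smul_iff hw₀] at hAw
  obtain ⟨hc, hρ'⟩ := hAw
  have hρ'_gt : ∀ i, rowRatio B w i < ρ' := fun i =>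
    (borderColumn_pos_iff hw).1 (hc ▸ hA.1 _ _)
  rw [hA_eq, hc, hρ_unique ρ' ⟨hρ'_gt, hρ'⟩]
end

section
/- Let r₁ ≥ r₂ ≥ ⋯ ≥ r_k be positive numbers with r₁ ≥ k and r_k ≤ k. If x₁, …, x_k are positive numbers satisfying r₁ + x₁ = r₂ + x₂ = ⋯ = r_k + x_k = 1 + 1/x₁ + ⋯ + 1/x_k, then x₁ ≤ 1 and x_k ≥ 1. -/
open Matrix BigOperators Finset

/- Writing `S = 1 + ∑ 1/xₗ`, each `xᵢ = S - rᵢ`, so `x` is ordered opposite to `r`: `x₁` is the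
smallest entry and `x_k` the largest. If `x₁ > 1`, every `1/xₗ < 1`, so `S < k + 1` and
`x₁ = S - r₁ < 1`; symmetrically `x_k < 1` forces `S > k + 1` and `x_k = S - r_k > 1`. -/

section

variable {ι : Type*} [Fintype ι] {r x : ι → ℝ} {i₀ : ι}

theorem sum_one_div_lt_card_of_one_lt [Nonempty ι] (h : ∀ i, 1 < x i) :
    ∑ i, 1 / x i < Fintype.card ι := by
  calc ∑ i, 1 / x i < ∑ _i : ι, (1 : ℝ) :=
        Finset.sum_lt_sum_of_nonempty Finset.univ_nonempty fun i _ =>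
          (div_lt_one (zero_lt_one.trans (h i))).2 (h i)
    _ = Fintype.card ι := by simp

theorem card_lt_sum_one_div_of_lt_one [Nonempty ι] (hpos : ∀ i, 0 < x i) (h : ∀ i, x i < 1) :
    (Fintype.card ι : ℝ) < ∑ i, 1 / x i := by
  calc (Fintype.card ι : ℝ) = ∑ _i : ι, (1 : ℝ) := by simp
    _ < ∑ i, 1 / x i :=
        Finset.sum_lt_sum_of_nonempty Finset.univ_nonempty fun i _ =>
          (one_lt_div (hpos i)).2 (h i)

theorem le_one_of_isMax_of_card_le (hmax : ∀ i, r i ≤ r i₀) (hcard : (Fintype.card ι : ℝ) ≤ r i₀)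
    (heq : ∀ i, r i + x i = 1 + ∑ l, 1 / x l) : x i₀ ≤ 1 := by
  have : Nonempty ι := ⟨i₀⟩
  by_contra! hgt
  have hsum := sum_one_div_lt_card_of_one_lt (x := x) fun i => by
    linarith [hmax i, heq i, heq i₀]
  linarith [heq i₀]

theorem one_le_of_isMin_of_le_card (hmin : ∀ i, r i₀ ≤ r i) (hcard : r i₀ ≤ Fintype.card ι)
    (hx : ∀ i, 0 < x i) (heq : ∀ i, r i + x i = 1 + ∑ l, 1 / x l) : 1 ≤ x i₀ := by
  have : Nonempty ι := ⟨i₀⟩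
  by_contra! hlt
  have hsum := card_lt_sum_one_div_of_lt_one (x := x) hx fun i => by
    linarith [hmin i, heq i, heq i₀]
  linarith [heq i₀]

end

theorem stmt13_general {k : ℕ} (r x : Fin (k + 1) → ℝ) (hr : Antitone r)
    (hr1 : ((k : ℝ) + 1) ≤ r 0) (hrk : r (Fin.last k) ≤ (k : ℝ) + 1)
    (hx : ∀ i, 0 < x i)
    (heq : ∀ i, r i + x i = 1 + ∑ l, 1 / x l) :
    x 0 ≤ 1 ∧ 1 ≤ x (Fin.last k) := by
  have hcard : (Fintype.card (Fin (k + 1)) : ℝ) = k + 1 := by simp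
  exact ⟨le_one_of_isMax_of_card_le (fun i => hr (Fin.zero_le i)) (hcard ▸ hr1) heq,
    one_le_of_isMin_of_le_card (fun i => hr (Fin.le_last i)) (hcard ▸ hrk) hx heq⟩

/-- Let `r₁ ≥ ⋯ ≥ r_k` be positive with `r₁ ≥ k` and `r_k ≤ k` (here `k` plays the role of
`k+1` entries indexed by `Fin (k+1)`). If positive `x₁, …, x_k` satisfy
`rᵢ + xᵢ = 1 + 1/x₁ + ⋯ + 1/x_k` for all `i`, then `x₁ ≤ 1` and `x_k ≥ 1`. -/
theorem stmt13 {k : ℕ} (r x : Fin (k + 1) → ℝ) (hr : Antitone r) (hrpos : ∀ i, 0 < r i)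
    (hr1 : ((k : ℝ) + 1) ≤ r 0) (hrk : r (Fin.last k) ≤ (k : ℝ) + 1)
    (hx : ∀ i, 0 < x i)
    (heq : ∀ i, r i + x i = 1 + ∑ l, 1 / x l) :
    x 0 ≤ 1 ∧ 1 ≤ x (Fin.last k) :=
  stmt13_general r x hr hr1 hrk hx heq
end

section
/- If B is a consistent k-by-k reciprocal matrix, then B is well-behaved; that is, either r₁ − r_k ≥ 1, or r₁ − r_k < 1 and 1/(1+r_k−r₁) + 1/(1+r_k−r₂) + ⋯ + 1/(1+r_k−r_{k−1}) + 1 − r_k ≥ 0, where r₁ ≥ ⋯ ≥ r_k are the row sums of B in nonincreasing order. -/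
open Matrix BigOperators Finset

/-!
A consistent matrix has the form `b i j = w i / w j`, so the row of the smallest weight has all
entries at most `1` and the smallest row sum satisfies `r_k ≤ k`. At `x = 1 + r_k - r₁` the
function collapses to `f x = ∑ᵢ 1 / (1 + r_k - rᵢ) - r_k`, and in the type II range every
denominator lies in `(0, 1]`, so the sum is at least `k ≥ r_k`.
-/

theorem IsConsistent.exists_forall_le_one {n : ℕ} [NeZero n] {A : Matrix (Fin n) (Fin n) ℝ}
    (hA : IsConsistent A) : ∃ i, ∀ j, A i j ≤ 1 := by
  obtain ⟨⟨hpos, hrec⟩, hcon⟩ := hA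
  obtain ⟨m, -, hm⟩ := exists_min_image univ (fun i => A i 0) univ_nonempty
  refine ⟨m, fun j => ?_⟩
  rw [← hcon m 0 j, hrec j 0, mul_one_div, div_le_one (hpos j 0)]
  exact hm j (mem_univ j)

theorem IsConsistent.exists_rowSum_le_card {n : ℕ} [NeZero n] {A : Matrix (Fin n) (Fin n) ℝ}
    (hA : IsConsistent A) : ∃ i, rowSum A i ≤ n := by
  obtain ⟨i, hi⟩ := hA.exists_forall_le_one
  refine ⟨i, ?_⟩
  calc rowSum A i = ∑ j, A i j := rfl
    _ ≤ ∑ _j : Fin n, (1 : ℝ) := sum_le_sum fun j _ => hi j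
    _ = n := by simp

theorem Fin.exists_perm_antitone {n : ℕ} {α : Type*} [LinearOrder α] (f : Fin n → α) :
    ∃ σ : Equiv.Perm (Fin n), Antitone (f ∘ σ) :=
  ⟨Fin.revPerm.trans (Tuple.sort f), fun _ _ hab =>
    Tuple.monotone_sort f (by simpa [Fin.rev_le_rev] using hab)⟩

theorem auxF_one_add_sub {k : ℕ} (r : Fin (k + 1) → ℝ) :
    auxF r (1 + r (Fin.last k) - r 0) = (∑ i, 1 / (1 + r (Fin.last k) - r i)) - r (Fin.last k) := by
  unfold auxF
  simp only [show ∀ i, r 0 - r i + (1 + r (Fin.last k) - r 0) = 1 + r (Fin.last k) - r i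
    from fun i => by ring]
  ring

theorem auxF_one_add_sub_nonneg {k : ℕ} {r : Fin (k + 1) → ℝ} (hr : Antitone r)
    (hspread : r 0 - r (Fin.last k) < 1) (hlast : r (Fin.last k) ≤ k + 1) :
    0 ≤ auxF r (1 + r (Fin.last k) - r 0) := by
  have hterm : ∀ i, 1 ≤ 1 / (1 + r (Fin.last k) - r i) := fun i => by
    have hi0 : r i ≤ r 0 := hr (Fin.zero_le i)
    have hil : r (Fin.last k) ≤ r i := hr (Fin.le_last i)
    rw [le_div_iff₀ (by linarith)]
    linarith
  have hsum : (k + 1 : ℝ) ≤ ∑ i, 1 / (1 + r (Fin.last k) - r i) := by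
    simpa using sum_le_sum fun i (_ : i ∈ univ) => hterm i
  rw [auxF_one_add_sub]
  linarith

/-- Every consistent reciprocal matrix is well-behaved. -/
theorem stmt14 {k : ℕ} (B : Matrix (Fin (k + 1)) (Fin (k + 1)) ℝ) (hB : IsConsistent B) :
    WellBehaved B := by
  obtain ⟨σ, hσ⟩ := Fin.exists_perm_antitone (rowSum B)
  refine ⟨σ, hσ, ?_⟩
  rcases le_or_gt 1 (rowSum B (σ 0) - rowSum B (σ (Fin.last k))) with htypeI | hspread
  · exact Or.inl htypeI
  refine Or.inr ⟨hspread, auxF_one_add_sub_nonneg hσ hspread ?_⟩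
  obtain ⟨m, hm⟩ := hB.exists_rowSum_le_card
  calc rowSum B (σ (Fin.last k)) ≤ rowSum B (σ (σ.symm m)) := hσ (Fin.le_last _)
    _ ≤ k + 1 := by simpa using hm
end

section
/- Let B be a k-by-k reciprocal matrix with constant row sums. If B is not the all-ones matrix, then B is not well-behaved: its maximal and minimal row sums satisfy r₁ − r_k = 0 < 1, and f(1 + r_k − r₁) = f(1) < 0, where f(x) = 1/x + Σ_{i=2}^{k} 1/(r₁−r_i+x) + 1 − r₁ − x. -/
open Matrix BigOperators Finset

/-!
Since `b_ji = 1 / b_ij` and `a + 1/a ≥ 2` with equality only at `a = 1`, the entries of an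
`n × n` reciprocal matrix other than the all-ones matrix sum to more than `n²`. With constant
row sums `r` the entry sum is `n r`, so `r > n`. On the other hand, for constant row sums every
term of the sum in `f(1)` equals `1`, so `f(1) = n - r < 0` and both alternatives of
well-behavedness fail.
-/

section AddInv

variable {K : Type*} [Field K] [LinearOrder K] [IsStrictOrderedRing K] {a : K}

theorem two_le_add_inv (ha : 0 < a) : 2 ≤ a + a⁻¹ := by
  have h : a * a⁻¹ = 1 := mul_inv_cancel₀ ha.ne'
  nlinarith [sq_nonneg (a - 1), inv_pos.mpr ha]

theorem two_lt_add_inv (ha : 0 < a) (ha1 : a ≠ 1) : 2 < a + a⁻¹ := by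
  have h : a * a⁻¹ = 1 := mul_inv_cancel₀ ha.ne'
  have hsq : 0 < (a - 1) ^ 2 := by
    have := sub_ne_zero.mpr ha1
    positivity
  nlinarith [inv_pos.mpr ha]

end AddInv

namespace IsReciprocal

variable {n : ℕ} {A : Matrix (Fin n) (Fin n) ℝ}

theorem sum_entries_eq_sum_add_inv (hA : IsReciprocal A) :
    ∑ i, ∑ j, A i j = ∑ i, ∑ j, (A i j + (A i j)⁻¹) / 2 := by
  have hsymm : ∑ i, ∑ j, (A i j)⁻¹ = ∑ i, ∑ j, A i j := by
    rw [Finset.sum_comm]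
    exact Finset.sum_congr rfl fun j _ => Finset.sum_congr rfl fun i _ => by
      rw [hA.2 i j, one_div]
  simp only [← Finset.sum_div, Finset.sum_add_distrib, hsymm]
  ring

theorem card_sq_lt_sum_entries (hA : IsReciprocal A) (hne : ∃ i j, A i j ≠ 1) :
    (n : ℝ) ^ 2 < ∑ i, ∑ j, A i j := by
  obtain ⟨i₀, j₀, hij⟩ := hne
  have hcount : (n : ℝ) ^ 2 = ∑ _i : Fin n, ∑ _j : Fin n, (1 : ℝ) := by simp [sq]
  rw [hA.sum_entries_eq_sum_add_inv, hcount]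
  refine Finset.sum_lt_sum (fun i _ => Finset.sum_le_sum fun j _ => ?_)
    ⟨i₀, Finset.mem_univ _, Finset.sum_lt_sum (fun j _ => ?_) ⟨j₀, Finset.mem_univ _, ?_⟩⟩
  · linarith [two_le_add_inv (hA.1 i j)]
  · linarith [two_le_add_inv (hA.1 i₀ j)]
  · linarith [two_lt_add_inv (hA.1 i₀ j₀) hij]

theorem card_lt_of_rowSum_eq (hA : IsReciprocal A) (hne : ∃ i j, A i j ≠ 1) {c : ℝ}
    (hc : ∀ i, rowSum A i = c) : (n : ℝ) < c := by
  have hc' : ∀ i, ∑ j, A i j = c := hc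
  have htotal : ∑ i, ∑ j, A i j = n * c := by
    simp only [hc', Finset.sum_const, Finset.card_univ, Fintype.card_fin, nsmul_eq_mul]
  have h := hA.card_sq_lt_sum_entries hne
  rw [htotal, sq] at h
  exact lt_of_mul_lt_mul_left h n.cast_nonneg

end IsReciprocal

theorem auxF_of_forall_eq {k : ℕ} {r : Fin (k + 1) → ℝ} {c : ℝ} (hr : ∀ i, r i = c) (x : ℝ) :
    auxF r x = (k + 1) / x + 1 - c - x := by
  simp [auxF, hr, div_eq_mul_inv]

theorem wellBehaved_iff_of_rowSum_eq {k : ℕ} {B : Matrix (Fin (k + 1)) (Fin (k + 1)) ℝ} {c : ℝ}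
    (hc : ∀ i, rowSum B i = c) : WellBehaved B ↔ c ≤ k + 1 := by
  have hf : ∀ σ : Equiv.Perm (Fin (k + 1)), auxF (rowSum B ∘ σ) 1 = k + 1 - c := fun σ => by
    rw [auxF_of_forall_eq (r := rowSum B ∘ σ) fun i => hc (σ i)]
    ring
  simp only [WellBehaved, hc, sub_self, add_sub_cancel_right, hf]
  constructor
  · rintro ⟨σ, -, h | ⟨-, h⟩⟩ <;> linarith
  · intro h
    refine ⟨1, fun i j _ => ?_, Or.inr ⟨one_pos, by linarith⟩⟩
    simp only [Function.comp_apply, hc, le_refl]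

/-- A reciprocal matrix with constant row sums that is not the all-ones matrix is not
well-behaved: its largest and smallest row sums coincide, and `f(1) < 0`. -/
theorem stmt15 {k : ℕ} (B : Matrix (Fin (k + 1)) (Fin (k + 1)) ℝ) (hB : IsReciprocal B)
    (hconst : ∀ i, rowSum B i = rowSum B 0) (hne : ¬ ∀ i j, B i j = 1) :
    ¬ WellBehaved B ∧ rowSum B 0 - rowSum B (Fin.last k) = 0 ∧
      auxF (rowSum B) 1 < 0 := by
  have hlt : ((k + 1 : ℕ) : ℝ) < rowSum B 0 := hB.card_lt_of_rowSum_eq (by simpa using hne) hconst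
  push_cast at hlt
  refine ⟨fun h => ?_, by rw [hconst (Fin.last k), sub_self], ?_⟩
  · linarith [(wellBehaved_iff_of_rowSum_eq hconst).mp h]
  · rw [auxF_of_forall_eq hconst]
    linarith
end

section
/- Let A be an n-by-n reciprocal matrix whose Perron vector is the all-ones vector (i.e., A has constant row sums). If the principal submatrix A(n), obtained by deleting the last row and column, is not well-behaved, then the all-ones vector is inefficient for A; moreover, every off-diagonal entry in the last column of A is strictly less than 1 (vertex n is a sink of G(A, e_n)). -/
/-!
Write `aᵢ = A i n` for the last column of `A`. Constant row sums `c` give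
`rowSum A(n) i = c - aᵢ`, and the last row gives `c = 1 + ∑ 1/aᵢ`. If some `aᵢ ≥ 1`, then
`A(n)` is well-behaved: either its row-sum spread `max a - min a` is at least `1`, or at
`x = 1 - (max a - min a)` every term `1/(1 + aᵢ - max a)` of `f` dominates `1/aᵢ`, whence
`f(x) ≥ max a - 1 ≥ 0`. So all `aᵢ < 1`, and then scaling the last entry of the all-ones vector
by `1/s` with `max a < s < 1` strictly improves every entry of the last row and column.
-/

open Matrix BigOperators Finset

lemma IsReciprocal.apply_self_eq_one {N : ℕ} {A : Matrix (Fin N) (Fin N) ℝ}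
    (hA : IsReciprocal A) (i : Fin N) : A i i = 1 := by
  have hsq : A i i * A i i = 1 := (eq_div_iff (hA.1 i i).ne').mp (hA.2 i i)
  nlinarith [hA.1 i i]

lemma rowSum_castSucc {N : ℕ} (A : Matrix (Fin (N + 1)) (Fin (N + 1)) ℝ) (i : Fin N) :
    rowSum A i.castSucc =
      rowSum (A.submatrix Fin.castSucc Fin.castSucc) i + A i.castSucc (Fin.last N) := by
  simp only [rowSum, Fin.sum_univ_castSucc, submatrix_apply]

lemma IsReciprocal.rowSum_last {N : ℕ} {A : Matrix (Fin (N + 1)) (Fin (N + 1)) ℝ}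
    (hA : IsReciprocal A) :
    rowSum A (Fin.last N) = ∑ j : Fin N, 1 / A j.castSucc (Fin.last N) + 1 := by
  rw [rowSum, Fin.sum_univ_castSucc, hA.apply_self_eq_one]
  congr 1
  exact Finset.sum_congr rfl fun j _ => hA.2 _ _

lemma Finite.exists_lt_forall_lt {ι : Type*} [Finite ι] {f : ι → ℝ} {b : ℝ}
    (h : ∀ i, f i < b) : ∃ s < b, ∀ i, f i < s := by
  cases isEmpty_or_nonempty ι
  · exact ⟨b - 1, by linarith, isEmptyElim⟩
  · obtain ⟨i₀, hi₀⟩ := Finite.exists_max f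
    exact ⟨(f i₀ + b) / 2, by linarith [h i₀], fun i => by linarith [hi₀ i, h i₀]⟩

lemma IsReciprocal.abs_sub_update_div_le {N : ℕ} {A : Matrix (Fin N) (Fin N) ℝ}
    (hA : IsReciprocal A) {k : Fin N} {s : ℝ} (hs0 : 0 < s) (hs1 : s ≤ 1)
    (hs : ∀ i, i ≠ k → A i k ≤ s) (i j : Fin N) :
    let v := Function.update (fun _ => (1 : ℝ)) k s⁻¹
    |A i j - v i / v j| ≤ |A i j - 1| := by
  intro v
  have hsinv : 1 ≤ s⁻¹ := one_le_inv₀ hs0 |>.mpr hs1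
  by_cases hi : i = k <;> by_cases hj : j = k
  · simp [v, hi, hj, hs0.ne']
  · subst hi
    have hinv : s⁻¹ ≤ A i j := by
      rw [hA.2 j i, one_div]; exact inv_anti₀ (hA.1 j i) (hs j hj)
    simp only [v, Function.update_self, Function.update_of_ne hj, div_one]
    rw [abs_of_nonneg (by linarith), abs_of_nonneg (by linarith)]
    linarith
  · subst hj
    have hik := hs i hi
    simp only [v, Function.update_self, Function.update_of_ne hi, one_div, inv_inv]
    rw [abs_of_nonpos (by linarith), abs_of_nonpos (by linarith)]
    linarith
  · simp [v, hi, hj]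

theorem not_isEfficient_one_of_col_lt_one {N : ℕ} [Nontrivial (Fin N)]
    {A : Matrix (Fin N) (Fin N) ℝ} (hA : IsReciprocal A) (k : Fin N)
    (hk : ∀ i, i ≠ k → A i k < 1) : ¬ IsEfficient A (fun _ => 1) := by
  rintro ⟨-, heff⟩
  obtain ⟨s, hs1, hs⟩ := Finite.exists_lt_forall_lt fun i : {i // i ≠ k} => hk i i.2
  obtain ⟨j, hj⟩ := exists_ne k
  have hs0 : 0 < s := (hA.1 j k).trans (hs ⟨j, hj⟩)
  have hvpos : PosVec (Function.update (fun _ => 1) k s⁻¹) := fun i => by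
    rcases eq_or_ne i k with rfl | hi
    · simpa using hs0
    · simp [Function.update_of_ne hi]
  obtain ⟨c, -, hvc⟩ := heff _ hvpos fun i j => by
    simpa using hA.abs_sub_update_div_le hs0 hs1.le (fun i hi => (hs ⟨i, hi⟩).le) i j
  have hvk := congrFun hvc k
  have hvj := congrFun hvc j
  simp only [Function.update_self, Function.update_of_ne hj, Pi.smul_apply, smul_eq_mul,
    mul_one] at hvk hvj
  have : s⁻¹ = 1 := hvk.trans hvj.symm
  rw [inv_eq_one] at this
  linarith

lemma exists_perm_antitone_comp {k : ℕ} (r : Fin k → ℝ) :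
    ∃ σ : Equiv.Perm (Fin k), Antitone (r ∘ σ) :=
  ⟨Fin.revPerm.trans (Tuple.sort r), fun _ _ hxy =>
    Tuple.monotone_sort r (Fin.rev_le_rev.mpr hxy)⟩

section Sorted

variable {k : ℕ} {r : Fin (k + 1) → ℝ} {σ : Equiv.Perm (Fin (k + 1))}

lemma Antitone.apply_le_comp_perm_zero (h : Antitone (r ∘ σ)) (i : Fin (k + 1)) :
    r i ≤ r (σ 0) := by
  simpa using h (Fin.zero_le (σ.symm i))

lemma Antitone.comp_perm_last_le_apply (h : Antitone (r ∘ σ)) (i : Fin (k + 1)) :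
    r (σ (Fin.last k)) ≤ r i := by
  simpa using h (Fin.le_last (σ.symm i))

end Sorted

lemma auxF_comp_perm {k : ℕ} (r : Fin (k + 1) → ℝ) (σ : Equiv.Perm (Fin (k + 1))) (x : ℝ) :
    auxF (r ∘ σ) x = ∑ i, 1 / (r (σ 0) - r i + x) + 1 - r (σ 0) - x := by
  simp only [auxF, Function.comp_apply]
  rw [Equiv.sum_comp σ fun i => 1 / (r (σ 0) - r i + x)]

/-- `hB` and `hc` describe `A(n)` for a reciprocal `A` with constant row sum `c` and last
column `a`. -/
theorem wellBehaved_of_rowSum_eq {k : ℕ} (B : Matrix (Fin (k + 1)) (Fin (k + 1)) ℝ)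
    {a : Fin (k + 1) → ℝ} {c : ℝ} (hB : ∀ i, rowSum B i = c - a i)
    (hc : c = ∑ j, 1 / a j + 1) (hone : ∃ i, 1 ≤ a i) : WellBehaved B := by
  obtain ⟨σ, hσ⟩ := exists_perm_antitone_comp (rowSum B)
  set m := a (σ 0)
  set M := a (σ (Fin.last k))
  have hm : ∀ i, m ≤ a i := fun i => by
    have := hσ.apply_le_comp_perm_zero i; rw [hB, hB] at this; linarith
  have hM : ∀ i, a i ≤ M := fun i => by
    have := hσ.comp_perm_last_le_apply i; rw [hB, hB] at this; linarith
  have hM1 : 1 ≤ M := by obtain ⟨i, hi⟩ := hone; exact hi.trans (hM i)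
  refine ⟨σ, hσ, ?_⟩
  simp only [hB]
  rcases le_or_gt 1 (M - m) with hspread | hspread
  · left; linarith
  · right
    refine ⟨by linarith, ?_⟩
    have hterm : ∑ i, 1 / (c - m - (c - a i) + (1 + (c - M) - (c - m))) ≥ ∑ i, 1 / a i :=
      Finset.sum_le_sum fun i _ => by
        apply one_div_le_one_div_of_le <;> linarith [hm i]
    rw [auxF_comp_perm]
    simp only [hB]
    linarith

/-- If a reciprocal matrix `A` has constant row sums (Perron vector the all-ones vector) and
its last principal submatrix `A(n)` is not well-behaved, then the all-ones vector is
inefficient for `A` and every off-diagonal entry of the last column of `A` is less than `1`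
(vertex `n` is a sink of `G(A, e_n)`). -/
theorem stmt16 {n : ℕ} (A : Matrix (Fin (n + 2)) (Fin (n + 2)) ℝ) (hA : IsReciprocal A)
    (hconst : ∃ c : ℝ, ∀ i, rowSum A i = c)
    (hwb : ¬ WellBehaved (A.submatrix Fin.castSucc Fin.castSucc)) :
    ¬ IsEfficient A (fun _ => 1) ∧
    ∀ i : Fin (n + 1), A i.castSucc (Fin.last (n + 1)) < 1 := by
  obtain ⟨c, hc⟩ := hconst
  have hsub : ∀ i, rowSum (A.submatrix Fin.castSucc Fin.castSucc) i =
      c - A i.castSucc (Fin.last (n + 1)) := fun i => by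
    linarith [rowSum_castSucc A i, hc i.castSucc]
  have hcol : ∀ i : Fin (n + 1), A i.castSucc (Fin.last (n + 1)) < 1 := by
    by_contra! hone
    exact hwb (wellBehaved_of_rowSum_eq _ hsub ((hc _).symm.trans hA.rowSum_last) hone)
  refine ⟨not_isEfficient_one_of_col_lt_one hA (Fin.last _) fun i hi => ?_, hcol⟩
  obtain ⟨i, rfl⟩ := Fin.exists_castSucc_eq.mpr hi
  exact hcol i
end

section
/- Let A be an n-by-n reciprocal matrix with constant row sums (Perron vector e_n). If the all-ones vector e_{n−1} is efficient for the principal submatrix A(n) and e_n is inefficient for A, then A(n) is not well-behaved. -/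
open Matrix BigOperators Finset

lemma abs_key {a t : ℝ} (ht : 1 < t) (h : |a - t| ≤ |a - 1|) : 1 + t ≤ 2 * a := by
  have h2 : (a - t)^2 ≤ (a - 1)^2 := by
    have := mul_self_le_mul_self (abs_nonneg (a - t)) h
    simpa [← sq, sq_abs] using this
  nlinarith

/-- If a reciprocal matrix `A` has constant row sums, the all-ones vector is efficient for
the principal submatrix `A(n)` but inefficient for `A`, then `A(n)` is not well-behaved. -/
theorem stmt17 {n : ℕ} (A : Matrix (Fin (n + 2)) (Fin (n + 2)) ℝ) (hA : IsReciprocal A)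
    (hconst : ∃ c : ℝ, ∀ i, rowSum A i = c)
    (heff : IsEfficient (A.submatrix Fin.castSucc Fin.castSucc) (fun _ => 1))
    (hineff : ¬ IsEfficient A (fun _ => 1)) :
    ¬ WellBehaved (A.submatrix Fin.castSucc Fin.castSucc) := by
  obtain ⟨cA, hcA⟩ := hconst
  unfold IsEfficient at hineff
  push_neg at hineff
  obtain ⟨v, hvpos, hvle, hvne⟩ := hineff (fun _ => one_pos)
  -- apply efficiency on the submatrix to the restriction of v
  obtain ⟨c, hc, hvc⟩ := heff.2 (fun i => v i.castSucc) (fun i => hvpos _)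
    (fun i j => hvle i.castSucc j.castSucc)
  have hvi : ∀ i : Fin (n + 1), v i.castSucc = c := by
    intro i
    have := congrFun hvc i
    simpa using this
  set L : Fin (n + 2) := Fin.last (n + 1) with hL
  set t : ℝ := v L / c with htdef
  have hvL : 0 < v L := hvpos L
  have ht0 : 0 < t := div_pos hvL hc
  have htne : t ≠ 1 := by
    intro ht1
    apply hvne c hc
    funext i
    refine Fin.lastCases ?_ ?_ i
    · have : v L = c := by
        field_simp [htdef] at ht1
        rw [htdef] at ht1; exact (div_eq_one_iff_eq hc.ne').mp ht1
      simpa using this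
    · intro j
      simpa using hvi j
  -- the last-row entries
  set a : Fin (n + 1) → ℝ := fun j => A L j.castSucc with hadef
  have hapos : ∀ j, 0 < a j := fun j => hA.1 _ _
  have hdiag : A L L = 1 := by
    have h := hA.2 L L
    have hp := hA.1 L L
    field_simp at h
    nlinarith
  have hreca : ∀ j : Fin (n + 1), A j.castSucc L = 1 / a j := fun j => hA.2 L j.castSucc
  -- row sum identities
  have hrowB : ∀ j : Fin (n + 1),
      rowSum (A.submatrix Fin.castSucc Fin.castSucc) j = cA - 1 / a j := by
    intro j
    have h1 := hcA j.castSucc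
    rw [rowSum, Fin.sum_univ_castSucc] at h1
    rw [hreca j] at h1
    rw [rowSum]
    simp only [submatrix_apply]
    linarith
  have hcAlast : cA = (∑ j, a j) + 1 := by
    have h1 := hcA L
    rw [rowSum, Fin.sum_univ_castSucc, hdiag] at h1
    linarith
  -- key inequalities at the last row/column
  have h1 : ∀ j : Fin (n + 1), |a j - t| ≤ |a j - 1| := by
    intro j
    have := hvle L j.castSucc
    rw [hvi j] at this
    simpa [hadef, htdef] using this
  have h2 : ∀ j : Fin (n + 1), |1 / a j - 1 / t| ≤ |1 / a j - 1| := by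
    intro j
    have := hvle j.castSucc L
    rw [hvi j, hreca j] at this
    have hvc' : c / v L = 1 / t := by
      rw [htdef, one_div_div]
    rw [hvc'] at this
    simpa using this
  -- case t < 1 is impossible
  rcases lt_or_gt_of_ne htne with htlt | htgt
  · exfalso
    have hinvt : 1 < 1 / t := by
      rw [lt_div_iff₀ ht0]; linarith
    have ha1 : ∀ j, a j < 1 := by
      intro j
      have := abs_key hinvt (h2 j)
      have hpj := hapos j
      have h3 : 1 < 1 / a j := by linarith
      rw [lt_div_iff₀ hpj] at h3
      linarith
    -- sum of entries of B is at least (n+1)^2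
    set S : ℝ := ∑ j : Fin (n + 1), ∑ k : Fin (n + 1), A j.castSucc k.castSucc with hS
    have hSS : 2 * ((n : ℝ) + 1)^2 ≤ 2 * S := by
      have hflip : (∑ j : Fin (n + 1), ∑ k : Fin (n + 1), A k.castSucc j.castSucc) = S :=
        Finset.sum_comm
      have hsum : 2 * S = ∑ j : Fin (n + 1), ∑ k : Fin (n + 1),
          (A j.castSucc k.castSucc + A k.castSucc j.castSucc) := by
        simp only [Finset.sum_add_distrib]
        rw [hflip, ← hS]; ring
      rw [hsum]
      have hpt : ∀ j k : Fin (n + 1), (2 : ℝ) ≤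
          A j.castSucc k.castSucc + A k.castSucc j.castSucc := by
        intro j k
        have h := hA.2 j.castSucc k.castSucc
        have hp := hA.1 j.castSucc k.castSucc
        rw [h]
        have hinv : A j.castSucc k.castSucc * (1 / A j.castSucc k.castSucc) = 1 := by
          field_simp
        nlinarith [sq_nonneg (A j.castSucc k.castSucc - 1)]
      calc 2 * ((n : ℝ) + 1)^2 = ∑ _j : Fin (n + 1), ∑ _k : Fin (n + 1), (2:ℝ) := by
            simp [Finset.sum_const, Finset.card_univ]; try ring
        _ ≤ _ := Finset.sum_le_sum (fun j _ => Finset.sum_le_sum (fun k _ => hpt j k))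
    have hrowsum : ((n : ℝ) + 1) * cA = S + ∑ j, 1 / a j := by
      have : ∀ j : Fin (n + 1), cA = (∑ k : Fin (n + 1), A j.castSucc k.castSucc) + 1 / a j := by
        intro j
        have h1 := hcA j.castSucc
        rw [rowSum, Fin.sum_univ_castSucc, hreca j] at h1
        linarith
      calc ((n : ℝ) + 1) * cA = ∑ _j : Fin (n + 1), cA := by
            simp [Finset.sum_const, Finset.card_univ]; try ring
        _ = S + ∑ j, 1 / a j := by
            rw [hS, ← Finset.sum_add_distrib]
            exact Finset.sum_congr rfl (fun j _ => this j)
    have hsuma : ∑ j, a j < (n : ℝ) + 1 := by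
      have := Finset.sum_lt_sum_of_nonempty (Finset.univ_nonempty (α := Fin (n + 1)))
        (fun j _ => ha1 j)
      simpa [Finset.card_univ] using this
    have hsuminv : (n : ℝ) + 1 < ∑ j, 1 / a j := by
      have hgt : ∀ j : Fin (n + 1), (1 : ℝ) < 1 / a j := by
        intro j
        rw [lt_div_iff₀ (hapos j)]
        linarith [ha1 j]
      have := Finset.sum_lt_sum_of_nonempty (Finset.univ_nonempty (α := Fin (n + 1)))
        (fun j _ => hgt j)
      simpa [Finset.card_univ] using this
    nlinarith
  -- case t > 1 : last row entries all exceed 1, well-behavedness fails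
  · have ha1 : ∀ j, 1 < a j := by
      intro j
      have := abs_key htgt (h1 j)
      linarith
    rintro ⟨σ, hanti, hcase⟩
    set p : Fin (n + 1) := σ 0 with hp
    set q : Fin (n + 1) := σ (Fin.last n) with hq
    have hrp := hrowB p
    have hrq := hrowB q
    have hinvlt : ∀ j, 1 / a j < 1 := by
      intro j
      rw [div_lt_one (hapos j)]
      exact ha1 j
    have hinvpos : ∀ j, 0 < 1 / a j := fun j => one_div_pos.mpr (hapos j)
    rcases hcase with hI | ⟨hlt, hf⟩
    · rw [hrp, hrq] at hI
      have := hinvlt q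
      have := hinvpos p
      linarith
    · -- show auxF < 0
      set s : ℝ := 1 - 1 / a q with hs
      have hspos : 0 < s := by have := hinvlt q; rw [hs]; linarith
      set x : ℝ := 1 + rowSum (A.submatrix Fin.castSucc Fin.castSucc) q
        - rowSum (A.submatrix Fin.castSucc Fin.castSucc) p with hx
      have hxval : x = 1 + 1 / a p - 1 / a q := by rw [hx, hrp, hrq]; ring
      have hfval : auxF (rowSum (A.submatrix Fin.castSucc Fin.castSucc) ∘ σ) x
          = (∑ j, 1 / (1 / a j + s)) + 1 / a q - cA := by
        rw [auxF]
        have hterm : ∀ i : Fin (n + 1),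
            (rowSum (A.submatrix Fin.castSucc Fin.castSucc) ∘ σ) 0
            - (rowSum (A.submatrix Fin.castSucc Fin.castSucc) ∘ σ) i + x
            = 1 / a (σ i) + s := by
          intro i
          simp only [Function.comp_apply]
          rw [hrowB (σ i), ← hp, hrp, hxval, hs]
          ring
        have hsum : (∑ i, 1 / ((rowSum (A.submatrix Fin.castSucc Fin.castSucc) ∘ σ) 0
            - (rowSum (A.submatrix Fin.castSucc Fin.castSucc) ∘ σ) i + x))
            = ∑ j, 1 / (1 / a j + s) := by
          rw [Finset.sum_congr rfl (fun i _ => by rw [hterm i])]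
          exact Equiv.sum_comp σ (fun j => 1 / (1 / a j + s))
        rw [hsum]
        simp only [Function.comp_apply, ← hp]
        rw [hrp, hxval, hs]
        ring
      have hneg : auxF (rowSum (A.submatrix Fin.castSucc Fin.castSucc) ∘ σ) x < 0 := by
        rw [hfval, hcAlast]
        have hterm : ∀ j : Fin (n + 1), 1 / (1 / a j + s) < a j := by
          intro j
          have h1 : 1 / (1 / a j + s) < 1 / (1 / a j) :=
            one_div_lt_one_div_of_lt (hinvpos j) (lt_add_of_pos_right _ hspos)
          rwa [one_div_one_div] at h1
        have hsum : ∑ j, 1 / (1 / a j + s) < ∑ j, a j :=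
          Finset.sum_lt_sum_of_nonempty (Finset.univ_nonempty (α := Fin (n + 1)))
            (fun j _ => hterm j)
        have := hinvlt q
        linarith
      linarith
end

section
/- Let A be an n-by-n reciprocal matrix whose principal submatrix A(n) (delete last row and column) is consistent. Then the Perron vector of A is efficient for A. -/
open Matrix BigOperators Finset

private lemma two_le_add_of_mul_one (a b : ℝ) (ha : 0 < a) (hb : 0 < b) (h : a * b = 1) :
    2 ≤ a + b := by
  nlinarith [mul_nonneg (sq_nonneg (a - 1)) hb.le]

/-- If the principal submatrix `A(n)` of a reciprocal matrix `A` (deleting the last row and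
column) is consistent, then the Perron vector of `A` is efficient for `A`. -/
theorem stmt18 {n : ℕ} (A : Matrix (Fin (n + 1)) (Fin (n + 1)) ℝ) (hA : IsReciprocal A)
    (hcons : IsConsistent (A.submatrix Fin.castSucc Fin.castSucc))
    (w : Fin (n + 1) → ℝ) (hw : PosVec w) (ρ : ℝ) (heig : A.mulVec w = ρ • w) :
    IsEfficient A w := by
  obtain ⟨hApos, hArec⟩ := hA
  refine ⟨hw, ?_⟩
  intro v hv hcomp
  have heigc : ∀ i, ∑ j, A i j * w j = ρ * w i := by
    intro i
    have h := congrFun heig i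
    simpa [Matrix.mulVec, dotProduct] using h
  have hdiag : ∀ i, A i i = 1 := by
    intro i
    have h := hArec i i
    rw [eq_div_iff (hApos i i).ne'] at h
    rcases mul_self_eq_one_iff.1 h with h1 | h1
    · exact h1
    · nlinarith [hApos i i]
  have hrowdiv : ∀ i, ∑ j, A i j * w j / w i = ρ := by
    intro i
    rw [← Finset.sum_div, heigc i, mul_div_assoc, div_self (hw i).ne', mul_one]
  -- ρ ≥ n + 1
  have hrho : (n : ℝ) + 1 ≤ ρ := by
    have key : ∀ i j : Fin (n+1), 2 ≤ A i j * w j / w i + A j i * w i / w j := by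
      intro i j
      have hprod : (A i j * w j / w i) * (A j i * w i / w j) = 1 := by
        rw [hArec i j]
        field_simp [(hApos i j).ne', (hw i).ne', (hw j).ne']
      exact two_le_add_of_mul_one _ _
        (div_pos (mul_pos (hApos i j) (hw j)) (hw i))
        (div_pos (mul_pos (hApos j i) (hw i)) (hw j)) hprod
    have e0 : ∑ i : Fin (n+1), ∑ j, (A i j * w j / w i + A j i * w i / w j)
        = (∑ i : Fin (n+1), ∑ j, A i j * w j / w i)
          + ∑ i : Fin (n+1), ∑ j, A j i * w i / w j := by
      rw [← Finset.sum_add_distrib]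
      exact Finset.sum_congr rfl fun i _ => Finset.sum_add_distrib
    have e1 : ∑ i : Fin (n+1), ∑ j, A i j * w j / w i = ((n:ℝ)+1) * ρ := by
      calc ∑ i : Fin (n+1), ∑ j, A i j * w j / w i = ∑ _i : Fin (n+1), ρ :=
            Finset.sum_congr rfl fun i _ => hrowdiv i
        _ = ((n:ℝ)+1) * ρ := by
            rw [Finset.sum_const, Finset.card_univ, Fintype.card_fin, nsmul_eq_mul]
            push_cast; ring
    have e2 : ∑ i : Fin (n+1), ∑ j, A j i * w i / w j = ((n:ℝ)+1) * ρ := by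
      rw [Finset.sum_comm]
      calc ∑ j : Fin (n+1), ∑ i, A j i * w i / w j = ∑ _j : Fin (n+1), ρ :=
            Finset.sum_congr rfl fun j _ => hrowdiv j
        _ = ((n:ℝ)+1) * ρ := by
            rw [Finset.sum_const, Finset.card_univ, Fintype.card_fin, nsmul_eq_mul]
            push_cast; ring
    have e3 : 2 * (((n:ℝ)+1) * ((n:ℝ)+1))
        ≤ ∑ i : Fin (n+1), ∑ j, (A i j * w j / w i + A j i * w i / w j) := by
      calc 2 * (((n:ℝ)+1) * ((n:ℝ)+1)) = ∑ _i : Fin (n+1), ∑ _j : Fin (n+1), (2:ℝ) := by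
            rw [Finset.sum_const, Finset.sum_const, Finset.card_univ, Fintype.card_fin,
              nsmul_eq_mul, nsmul_eq_mul]
            push_cast; ring
        _ ≤ _ := Finset.sum_le_sum fun i _ => Finset.sum_le_sum fun j _ => key i j
    rw [e0, e1, e2] at e3
    nlinarith [Nat.cast_nonneg (α := ℝ) n]
  -- the maximizer of v/w
  obtain ⟨i₁, -, hi₁⟩ := Finset.exists_max_image Finset.univ (fun i => v i / w i)
    Finset.univ_nonempty
  set c : ℝ := v i₁ / w i₁ with hc
  have hcpos : 0 < c := div_pos (hv i₁) (hw i₁)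
  have hle : ∀ k, v k ≤ c * w k := fun k => (div_le_iff₀ (hw k)).1 (hi₁ k (Finset.mem_univ k))
  have hi₁T : v i₁ = c * w i₁ := by
    rw [hc, div_mul_cancel₀ _ (hw i₁).ne']
  -- the edge-propagation step
  have step : ∀ i j, v i = c * w i → A i j * w j ≤ w i → v j = c * w j := by
    intro i j hvi hedge
    have hAle : A i j ≤ w i / w j := (le_div_iff₀ (hw j)).2 hedge
    have h3 : w i * v j ≤ v i * w j := by
      rw [hvi]
      nlinarith [hle j, hw i]
    have h4 : w i / w j ≤ v i / v j := (div_le_div_iff₀ (hw j) (hv j)).2 h3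
    have h5 := hcomp i j
    rw [abs_of_nonpos (by linarith : A i j - v i / v j ≤ 0),
        abs_of_nonpos (by linarith : A i j - w i / w j ≤ 0)] at h5
    have h6 : v i / v j = w i / w j := le_antisymm (by linarith) h4
    rw [div_eq_div_iff (hv j).ne' (hw j).ne'] at h6
    rw [hvi] at h6
    apply mul_left_cancel₀ (hw i).ne'
    linear_combination -h6
  rcases Nat.eq_zero_or_pos n with h0 | hn
  · -- trivial 1×1 case
    subst h0
    refine ⟨c, hcpos, funext fun j => ?_⟩
    have hj : j = i₁ := Fin.ext (by omega)
    rw [hj]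
    simpa using hi₁T
  · have hnR : (1:ℝ) ≤ (n:ℝ) := by exact_mod_cast hn
    set ℓ : Fin (n+1) := Fin.last n with hℓ
    set z : Fin n := ⟨0, hn⟩ with hz
    set u : Fin n → ℝ := fun i => A i.castSucc z.castSucc with hu
    have hupos : ∀ i, 0 < u i := fun i => hApos _ _
    have hAij : ∀ i j : Fin n, A i.castSucc j.castSucc = u i / u j := by
      intro i j
      have h1 : A i.castSucc z.castSucc * A z.castSucc j.castSucc = A i.castSucc j.castSucc :=
        hcons.2 i z j
      have h2 : A z.castSucc j.castSucc = 1 / A j.castSucc z.castSucc :=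
        hArec j.castSucc z.castSucc
      simp only [hu]
      rw [← h1, h2, mul_one_div]
    set S : ℝ := ∑ k : Fin n, w k.castSucc / u k with hS
    have hrow : ∀ i : Fin n, ρ * w i.castSucc = u i * S + A i.castSucc ℓ * w ℓ := by
      intro i
      have h := heigc i.castSucc
      rw [Fin.sum_univ_castSucc, ← hℓ] at h
      have h2 : ∑ j : Fin n, A i.castSucc j.castSucc * w j.castSucc = u i * S := by
        rw [hS, Finset.mul_sum]
        refine Finset.sum_congr rfl fun j _ => ?_
        rw [hAij i j]
        ring
      rw [h2] at h
      linarith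
    have hlast : ∑ j : Fin n, w j.castSucc / A j.castSucc ℓ = (ρ - 1) * w ℓ := by
      have h := heigc ℓ
      rw [Fin.sum_univ_castSucc, ← hℓ] at h
      have h2 : ∑ j : Fin n, A ℓ j.castSucc * w j.castSucc
          = ∑ j : Fin n, w j.castSucc / A j.castSucc ℓ := by
        refine Finset.sum_congr rfl fun j _ => ?_
        rw [hArec j.castSucc ℓ]
        ring
      rw [h2, hdiag ℓ] at h
      linarith
    -- extremal vertices of t = w/u
    obtain ⟨jmax, -, hjmax⟩ := Finset.exists_max_image Finset.univ
      (fun i : Fin n => w i.castSucc / u i) ⟨z, Finset.mem_univ z⟩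
    obtain ⟨jmin, -, hjmin⟩ := Finset.exists_min_image Finset.univ
      (fun i : Fin n => w i.castSucc / u i) ⟨z, Finset.mem_univ z⟩
    have hjmax' : ∀ b : Fin n, w b.castSucc / u b ≤ w jmax.castSucc / u jmax :=
      fun b => hjmax b (Finset.mem_univ b)
    have hjmin' : ∀ b : Fin n, w jmin.castSucc / u jmin ≤ w b.castSucc / u b :=
      fun b => hjmin b (Finset.mem_univ b)
    -- edges within the first n vertices
    have E1 : ∀ i j : Fin n, w j.castSucc / u j ≤ w i.castSucc / u i →
        A i.castSucc j.castSucc * w j.castSucc ≤ w i.castSucc := by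
      intro i j hij
      have h1 := (div_le_div_iff₀ (hupos j) (hupos i)).1 hij
      rw [hAij i j, div_mul_eq_mul_div, div_le_iff₀ (hupos j)]
      nlinarith [h1]
    -- some vertex points to ℓ
    have hexists : ∃ j ∈ (Finset.univ : Finset (Fin n)), w ℓ ≤ w j.castSucc / A j.castSucc ℓ := by
      apply Finset.exists_le_of_sum_le ⟨z, Finset.mem_univ z⟩
      rw [hlast, Finset.sum_const, Finset.card_univ, Fintype.card_fin, nsmul_eq_mul]
      nlinarith [hw ℓ, hrho, hnR]
    obtain ⟨j₀, -, hj₀⟩ := hexists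
    have hj₀' : A j₀.castSucc ℓ * w ℓ ≤ w j₀.castSucc := by
      rw [le_div_iff₀ (hApos j₀.castSucc ℓ)] at hj₀
      nlinarith [hj₀]
    have hj₀S : (ρ - 1) * w j₀.castSucc ≤ u j₀ * S := by
      have h := hrow j₀
      linarith
    -- (ρ-1) t_min ≤ S
    have hminS : (ρ - 1) * w jmin.castSucc ≤ u jmin * S := by
      have hρ1 : 0 ≤ ρ - 1 := by linarith
      have h2 : (ρ - 1) * (w j₀.castSucc / u j₀) ≤ S := by
        rw [← mul_div_assoc, div_le_iff₀ (hupos j₀)]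
        nlinarith [hj₀S]
      have h3 : (ρ - 1) * (w jmin.castSucc / u jmin) ≤ S := by
        nlinarith [mul_le_mul_of_nonneg_left (hjmin' j₀) hρ1]
      rw [← mul_div_assoc, div_le_iff₀ (hupos jmin)] at h3
      nlinarith [h3]
    -- S ≤ (ρ-1) t_max
    have hmaxS : u jmax * S ≤ (ρ - 1) * w jmax.castSucc := by
      have hSmax : S ≤ (n:ℝ) * (w jmax.castSucc / u jmax) := by
        rw [hS]
        calc ∑ k : Fin n, w k.castSucc / u k
            ≤ ∑ _k : Fin n, w jmax.castSucc / u jmax :=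
              Finset.sum_le_sum fun k _ => hjmax' k
          _ = (n:ℝ) * (w jmax.castSucc / u jmax) := by
              rw [Finset.sum_const, Finset.card_univ, Fintype.card_fin, nsmul_eq_mul]
      have h1 : S ≤ (ρ - 1) * (w jmax.castSucc / u jmax) := by
        have hdp := div_pos (hw jmax.castSucc) (hupos jmax)
        nlinarith [hSmax, hrho]
      calc u jmax * S ≤ u jmax * ((ρ - 1) * (w jmax.castSucc / u jmax)) :=
            mul_le_mul_of_nonneg_left h1 (hupos jmax).le
        _ = (ρ - 1) * w jmax.castSucc := by
            field_simp
            rw [mul_assoc]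
            exact mul_div_cancel_left₀ _ (hupos jmax).ne'
    -- key edges
    have F2 : A jmin.castSucc ℓ * w ℓ ≤ w jmin.castSucc := by
      have h := hrow jmin
      linarith
    have F3 : A ℓ jmax.castSucc * w jmax.castSucc ≤ w ℓ := by
      have h8 : w jmax.castSucc ≤ A jmax.castSucc ℓ * w ℓ := by
        have h := hrow jmax
        linarith
      rw [hArec jmax.castSucc ℓ, one_div, inv_mul_le_iff₀ (hApos jmax.castSucc ℓ)]
      exact h8
    -- propagate equality around the strongly connected skeleton
    have hstep_any_min : ∀ i : Fin n, v i.castSucc = c * w i.castSucc →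
        v jmin.castSucc = c * w jmin.castSucc :=
      fun i h => step _ _ h (E1 i jmin (hjmin' i))
    have hstep_min_ℓ : v jmin.castSucc = c * w jmin.castSucc → v ℓ = c * w ℓ :=
      fun h => step _ _ h F2
    have hstep_ℓ_max : v ℓ = c * w ℓ → v jmax.castSucc = c * w jmax.castSucc :=
      fun h => step _ _ h F3
    have hstep_max_any : ∀ j : Fin n, v jmax.castSucc = c * w jmax.castSucc →
        v j.castSucc = c * w j.castSucc :=
      fun j h => step _ _ h (E1 jmax j (hjmax' j))
    have hℓT : v ℓ = c * w ℓ := by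
      rcases Fin.eq_castSucc_or_eq_last i₁ with ⟨i, hi⟩ | hi
      · rw [hi] at hi₁T
        exact hstep_min_ℓ (hstep_any_min i hi₁T)
      · rw [hi, ← hℓ] at hi₁T
        exact hi₁T
    refine ⟨c, hcpos, funext fun j => ?_⟩
    show v j = (c • w) j
    simp only [Pi.smul_apply, smul_eq_mul]
    rcases Fin.eq_castSucc_or_eq_last j with ⟨jj, hjj⟩ | hjj
    · rw [hjj]
      exact hstep_max_any jj (hstep_ℓ_max hℓT)
    · rw [hjj, ← hℓ]
      exact hℓT
end
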